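/- arXiv:2105.09286 — 3 statements merged into one kernel-verified Lean document; each statement's English description precedes it below -/
import Mathlib

section
/- For every real S > 0, the function λ ↦ S · exp(−λ²) / (∫₀^λ exp(−y²) dy) − λ is strictly decreasing on (0, ∞), tends to +∞ as λ → 0⁺, and tends to −∞ as λ → ∞. -/
open Filter

noncomputable def Efun (l : ℝ) : ℝ := ∫ y in (0:ℝ)..l, Real.exp (-y ^ 2)

lemma cont_g : Continuous fun y : ℝ => Real.exp (-y ^ 2) := by continuity

lemma E_intInt (a b : ℝ) :
    IntervalIntegrable (fun y : ℝ => Real.exp (-y ^ 2)) MeasureTheory.volume a b :=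
  cont_g.intervalIntegrable a b

lemma E_cont : Continuous Efun :=
  intervalIntegral.continuous_primitive (fun a b => E_intInt a b) 0

lemma E_pos {l : ℝ} (hl : 0 < l) : 0 < Efun l := by
  apply intervalIntegral.intervalIntegral_pos_of_pos_on (E_intInt 0 l) _ hl
  intro x _
  positivity

lemma E_mono {a b : ℝ} (hab : a ≤ b) : Efun a ≤ Efun b := by
  have h := intervalIntegral.integral_add_adjacent_intervals (E_intInt 0 a) (E_intInt a b)
  have hnn : 0 ≤ ∫ y in a..b, Real.exp (-y ^ 2) := by
    apply intervalIntegral.integral_nonneg hab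
    intro x _; positivity
  simp only [Efun]
  linarith [h]

theorem stefan_f_strictAntiOn_and_limits (S : ℝ) (hS : 0 < S) :
    StrictAntiOn
      (fun l : ℝ => S * Real.exp (-l ^ 2) / (∫ y in (0:ℝ)..l, Real.exp (-y ^ 2)) - l)
      (Set.Ioi 0) ∧
    Tendsto
      (fun l : ℝ => S * Real.exp (-l ^ 2) / (∫ y in (0:ℝ)..l, Real.exp (-y ^ 2)) - l)
      (nhdsWithin 0 (Set.Ioi 0)) atTop ∧
    Tendsto
      (fun l : ℝ => S * Real.exp (-l ^ 2) / (∫ y in (0:ℝ)..l, Real.exp (-y ^ 2)) - l)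
      atTop atBot := by
  have hfeq : (fun l : ℝ => S * Real.exp (-l ^ 2) / (∫ y in (0:ℝ)..l, Real.exp (-y ^ 2)) - l)
      = fun l : ℝ => S * Real.exp (-l ^ 2) / Efun l - l := rfl
  rw [hfeq]
  refine ⟨?_, ?_, ?_⟩
  · -- strict anti
    intro a ha b hb hab
    simp only [Set.mem_Ioi] at ha hb
    have hEa := E_pos ha
    have hEb := E_pos hb
    have hexp : S * Real.exp (-b ^ 2) ≤ S * Real.exp (-a ^ 2) := by
      have : -b ^ 2 ≤ -a ^ 2 := by nlinarith
      have := Real.exp_le_exp.mpr this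
      nlinarith [Real.exp_pos (-b ^ 2)]
    have h1 : S * Real.exp (-b ^ 2) / Efun b ≤ S * Real.exp (-a ^ 2) / Efun a := by
      apply div_le_div₀ _ hexp hEa (E_mono hab.le)
      positivity
    simp only
    linarith
  · -- limit at 0+
    have hE0 : Efun 0 = 0 := by simp [Efun]
    have hEt : Tendsto Efun (nhdsWithin 0 (Set.Ioi 0)) (nhdsWithin 0 (Set.Ioi 0)) := by
      apply tendsto_nhdsWithin_of_tendsto_nhds_of_eventually_within
      · have := E_cont.tendsto 0
        rw [hE0] at this
        exact this.mono_left nhdsWithin_le_nhds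
      · filter_upwards [self_mem_nhdsWithin] with l hl using E_pos hl
    have hinv : Tendsto (fun l => (Efun l)⁻¹) (nhdsWithin 0 (Set.Ioi 0)) atTop :=
      tendsto_inv_nhdsGT_zero.comp hEt
    have hnum : Tendsto (fun l : ℝ => S * Real.exp (-l ^ 2)) (nhdsWithin 0 (Set.Ioi 0))
        (nhds S) := by
      have : Continuous fun l : ℝ => S * Real.exp (-l ^ 2) := by continuity
      have h := this.tendsto 0
      simpa using h.mono_left nhdsWithin_le_nhds
    have hdiv : Tendsto (fun l : ℝ => S * Real.exp (-l ^ 2) / Efun l)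
        (nhdsWithin 0 (Set.Ioi 0)) atTop := by
      simp only [div_eq_mul_inv]
      exact hnum.pos_mul_atTop hS hinv
    have hneg : Tendsto (fun l : ℝ => -l) (nhdsWithin 0 (Set.Ioi 0)) (nhds 0) := by
      have : Tendsto (fun l : ℝ => -l) (nhds (0:ℝ)) (nhds (-0:ℝ)) :=
        (continuous_neg.tendsto 0)
      simpa using this.mono_left nhdsWithin_le_nhds
    have hbd : ∀ᶠ l in nhdsWithin 0 (Set.Ioi 0), (-1:ℝ) ≤ -l :=
      hneg.eventually (eventually_ge_nhds (by norm_num : (-1:ℝ) < 0))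
    simpa [sub_eq_add_neg] using tendsto_atTop_add_right_of_le' _ (-1) hdiv hbd
  · -- limit at ∞
    have hE1 := E_pos (by norm_num : (0:ℝ) < 1)
    have hg : Tendsto (fun l : ℝ => S / Efun 1 - l) atTop atBot := by
      have h2 : Tendsto (fun l : ℝ => -l) atTop atBot := tendsto_neg_atBot_iff.mpr tendsto_id
      simpa [sub_eq_add_neg] using tendsto_atBot_add_const_left atTop (S / Efun 1) h2
    apply tendsto_atBot_mono' atTop _ hg
    filter_upwards [eventually_ge_atTop (1:ℝ)] with l hl
    have h1 : S * Real.exp (-l ^ 2) / Efun l ≤ S / Efun 1 := by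
      apply div_le_div₀ _ _ hE1 (E_mono hl)
      · exact hS.le
      · nlinarith [Real.exp_le_one_iff.mpr (by nlinarith : -l ^ 2 ≤ 0)]
    linarith
end

section
/- Let α > 0, λ > 0, and let T_l, T_m be real numbers. Define T̂(x,t) = T_l − (T_l − T_m) · (∫₀^{x/(2√(αt))} exp(−y²) dy) / (∫₀^λ exp(−y²) dy) for x ∈ ℝ and t > 0. Then T̂ satisfies the heat equation ∂T̂/∂t = α · ∂²T̂/∂x² at every point (x,t) with t > 0. -/
theorem similarity_temperature_heat_equation (α lam T_l T_m : ℝ)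
    (hα : 0 < α) (hlam : 0 < lam)
    (T : ℝ → ℝ → ℝ)
    (hT : ∀ x t, T x t = T_l - (T_l - T_m) *
        (∫ y in (0:ℝ)..(x / (2 * Real.sqrt (α * t))), Real.exp (-y ^ 2)) /
        (∫ y in (0:ℝ)..lam, Real.exp (-y ^ 2))) :
    ∀ x : ℝ, ∀ t : ℝ, 0 < t →
      deriv (fun τ => T x τ) t = α * deriv (fun ξ => deriv (fun ξ' => T ξ' t) ξ) x := by
  intro x t ht
  have hαt : 0 < α * t := mul_pos hα ht
  set s : ℝ := Real.sqrt (α * t) with hs_def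
  have hs : 0 < s := Real.sqrt_pos.mpr hαt
  have hss : s ^ 2 = α * t := Real.sq_sqrt hαt.le
  set c : ℝ := T_l - T_m with hc
  set E : ℝ := ∫ y in (0:ℝ)..lam, Real.exp (-y ^ 2) with hE
  have hcont : Continuous fun y : ℝ => Real.exp (-y ^ 2) := by continuity
  have hEpos : 0 < E := by
    apply intervalIntegral.intervalIntegral_pos_of_pos_on
      (hcont.intervalIntegrable 0 lam)
      (fun y _ => Real.exp_pos _) hlam
  set F : ℝ → ℝ := fun z => ∫ y in (0:ℝ)..z, Real.exp (-y ^ 2) with hFdef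
  have hF : ∀ z : ℝ, HasDerivAt F (Real.exp (-z ^ 2)) z := fun z =>
    intervalIntegral.integral_hasDerivAt_right (hcont.intervalIntegrable 0 z)
      (hcont.stronglyMeasurableAtFilter _ _) hcont.continuousAt
  -- time derivative
  have h1 : HasDerivAt (fun τ : ℝ => α * τ) α t := by
    simpa using (hasDerivAt_id t).const_mul α
  have h2 : HasDerivAt (fun τ : ℝ => Real.sqrt (α * τ)) (1 / (2 * s) * α) t :=
    (Real.hasDerivAt_sqrt hαt.ne').comp t h1
  have h3 : HasDerivAt (fun τ : ℝ => 2 * Real.sqrt (α * τ)) (2 * (1 / (2 * s) * α)) t :=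
    h2.const_mul 2
  have h4 : HasDerivAt (fun τ : ℝ => x / (2 * Real.sqrt (α * τ)))
      ((0 * (2 * s) - x * (2 * (1 / (2 * s) * α))) / (2 * s) ^ 2) t :=
    (hasDerivAt_const t x).div h3 (by positivity)
  have hFt : HasDerivAt (fun τ : ℝ => F (x / (2 * Real.sqrt (α * τ))))
      (Real.exp (-(x / (2 * s)) ^ 2) *
        ((0 * (2 * s) - x * (2 * (1 / (2 * s) * α))) / (2 * s) ^ 2)) t :=
    (hF _).comp t h4
  have hTt : HasDerivAt (fun τ : ℝ => T x τ)
      (-(c * (Real.exp (-(x / (2 * s)) ^ 2) *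
        ((0 * (2 * s) - x * (2 * (1 / (2 * s) * α))) / (2 * s) ^ 2)) / E)) t := by
    have := ((hFt.const_mul c).div_const E).const_sub T_l
    rw [show (fun τ : ℝ => T x τ) = _ from funext fun τ => hT x τ]
    exact this
  -- first space derivative
  have hfirst : (fun ξ => deriv (fun ξ' => T ξ' t) ξ) =
      fun ξ => -(c * (Real.exp (-(ξ / (2 * s)) ^ 2) * (1 / (2 * s))) / E) := by
    funext ξ
    have hlin : HasDerivAt (fun ξ' : ℝ => ξ' / (2 * s)) (1 / (2 * s)) ξ :=
      (hasDerivAt_id ξ).div_const (2 * s)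
    have hFx : HasDerivAt (fun ξ' : ℝ => F (ξ' / (2 * s)))
        (Real.exp (-(ξ / (2 * s)) ^ 2) * (1 / (2 * s))) ξ := (hF _).comp ξ hlin
    have hd : HasDerivAt (fun ξ' => T ξ' t)
        (-(c * (Real.exp (-(ξ / (2 * s)) ^ 2) * (1 / (2 * s))) / E)) ξ := by
      have := ((hFx.const_mul c).div_const E).const_sub T_l
      rw [show (fun ξ' : ℝ => T ξ' t) = _ from funext fun ξ' => hT ξ' t]
      exact this
    exact hd.deriv
  rw [hfirst]
  -- second space derivative
  have hu : HasDerivAt (fun ξ : ℝ => -(ξ / (2 * s)) ^ 2)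
      (-(2 * (x / (2 * s)) ^ 1 * (1 / (2 * s)))) x :=
    (((hasDerivAt_id x).div_const (2 * s)).pow 2).neg
  have hexp : HasDerivAt (fun ξ : ℝ => Real.exp (-(ξ / (2 * s)) ^ 2))
      (Real.exp (-(x / (2 * s)) ^ 2) * -(2 * (x / (2 * s)) ^ 1 * (1 / (2 * s)))) x :=
    hu.exp
  have hsecond : HasDerivAt
      (fun ξ => -(c * (Real.exp (-(ξ / (2 * s)) ^ 2) * (1 / (2 * s))) / E))
      (-(c * (Real.exp (-(x / (2 * s)) ^ 2) * -(2 * (x / (2 * s)) ^ 1 * (1 / (2 * s)))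
        * (1 / (2 * s))) / E)) x :=
    (((hexp.mul_const (1 / (2 * s))).const_mul c).div_const E).neg
  rw [hTt.deriv, hsecond.deriv]
  have h2s : (2 * s) ≠ 0 := by positivity
  field_simp
  nlinarith [hss, Real.exp_pos (-(x / (2 * s)) ^ 2), hs, mul_pos hα ht, sq_nonneg x]
end

section
/- Let ρ, c_p, h_m, α be positive reals with κ = ρ·c_p·α, let T_l > T_m be reals, and let λ > 0 satisfy λ · exp(λ²) · ∫₀^λ exp(−y²) dy = c_p·(T_l − T_m)/(2·h_m). Define T̂(x,t) = T_l − (T_l − T_m) · (∫₀^{x/(2√(αt))} exp(−y²) dy) / (∫₀^λ exp(−y²) dy) and X̂(t) = 2√α · λ · √t. Then for every t > 0 the Stefan condition holds: ρ · h_m · X̂′(t) = −κ · ∂T̂/∂x (X̂(t), t). -/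
theorem stefan_condition (ρ c_p h_m α κ T_l T_m lam : ℝ)
    (hρ : 0 < ρ) (hcp : 0 < c_p) (hhm : 0 < h_m) (hα : 0 < α)
    (hκ : κ = ρ * c_p * α) (hT : T_m < T_l) (hlam : 0 < lam)
    (hroot : lam * Real.exp (lam ^ 2) * (∫ y in (0:ℝ)..lam, Real.exp (-y ^ 2)) =
      c_p * (T_l - T_m) / (2 * h_m))
    (T : ℝ → ℝ → ℝ)
    (hTdef : ∀ x t, T x t = T_l - (T_l - T_m) *
        (∫ y in (0:ℝ)..(x / (2 * Real.sqrt (α * t))), Real.exp (-y ^ 2)) /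
        (∫ y in (0:ℝ)..lam, Real.exp (-y ^ 2)))
    (X : ℝ → ℝ)
    (hX : ∀ t, X t = 2 * Real.sqrt α * lam * Real.sqrt t) :
    ∀ t : ℝ, 0 < t →
      ρ * h_m * deriv X t = -κ * deriv (fun ξ => T ξ t) (X t) := by
  intro t ht
  have hcontf : Continuous fun y : ℝ => Real.exp (-y ^ 2) := by continuity
  set E := ∫ y in (0:ℝ)..lam, Real.exp (-y ^ 2) with hE
  have hEpos : 0 < E := by
    apply intervalIntegral.intervalIntegral_pos_of_pos_on
      (hcontf.intervalIntegrable 0 lam)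
    · intro x _; positivity
    · exact hlam
  set sa := Real.sqrt α with hsa
  set st := Real.sqrt t with hst
  have hsapos : 0 < sa := Real.sqrt_pos.mpr hα
  have hstpos : 0 < st := Real.sqrt_pos.mpr ht
  have hsasq : sa * sa = α := Real.mul_self_sqrt hα.le
  have hsat : Real.sqrt (α * t) = sa * st := Real.sqrt_mul hα.le t
  -- derivative of X
  have hXfun : X = fun u => 2 * sa * lam * Real.sqrt u := funext hX
  have hXderiv : HasDerivAt X (2 * sa * lam * (1 / (2 * st))) t := by
    rw [hXfun]
    exact (Real.hasDerivAt_sqrt ht.ne').const_mul _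
  -- derivative of the antiderivative g
  have hgderiv : ∀ b : ℝ, HasDerivAt (fun u => ∫ y in (0:ℝ)..u, Real.exp (-y ^ 2))
      (Real.exp (-b ^ 2)) b := by
    intro b
    exact intervalIntegral.integral_hasDerivAt_right
      (hcontf.intervalIntegrable 0 b)
      hcontf.stronglyMeasurable.stronglyMeasurableAtFilter
      hcontf.continuousAt
  set c : ℝ := 2 * (sa * st) with hc
  have hcpos : 0 < c := by positivity
  have hx0 : X t / c = lam := by
    rw [hX t]; field_simp [hc]; ring
  -- derivative of T in x at X t
  have hTderiv : HasDerivAt (fun ξ => T ξ t)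
      (-((T_l - T_m) * (Real.exp (-lam ^ 2) * (1 / c)) / E)) (X t) := by
    have hfun : (fun ξ => T ξ t) = fun ξ => T_l - (T_l - T_m) *
        (∫ y in (0:ℝ)..(ξ / c), Real.exp (-y ^ 2)) / E := by
      funext ξ
      rw [hTdef ξ t, hsat, ← hc]
    rw [hfun]
    have hinner : HasDerivAt (fun ξ : ℝ => ξ / c) (1 / c) (X t) := by
      simpa using (hasDerivAt_id (X t)).div_const c
    have hcomp : HasDerivAt (fun ξ => ∫ y in (0:ℝ)..(ξ / c), Real.exp (-y ^ 2))
        (Real.exp (-lam ^ 2) * (1 / c)) (X t) := by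
      have := (hgderiv (X t / c)).comp (X t) hinner
      rwa [hx0] at this
    simpa using ((hcomp.const_mul (T_l - T_m)).div_const E).const_sub T_l
  rw [hXderiv.deriv, hTderiv.deriv, hκ]
  have hexp : Real.exp (lam ^ 2) * Real.exp (-lam ^ 2) = 1 := by
    rw [← Real.exp_add]; simp
  have h1 : 2 * h_m * (lam * Real.exp (lam ^ 2) * E) = c_p * (T_l - T_m) := by
    rw [hroot]; field_simp
  have hkey : 2 * h_m * lam * E = c_p * (T_l - T_m) * Real.exp (-lam ^ 2) := by
    linear_combination Real.exp (-lam ^ 2) * h1 - 2 * h_m * lam * E * hexp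
  have hα' : α = sa * sa := hsasq.symm
  rw [hα']
  field_simp [hc]
  linear_combination (sa * st) * hkey
end
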